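/- arXiv:2511.10462 — 3 statements merged into one kernel-verified Lean document; each statement's English description precedes it below -/
import Mathlib

section
/- For all integers i, j, k, l one has δ(j,k,l) + δ(i,j,l) = δ(i,j,k) + δ(i,k,l). (This identity is exactly what makes the KLRW/Coulomb-branch multiplication rule μ²(a_{k,j}s^β, a_{j,i}s^α) = a_{k,i}s^{β+α+δ(i,j,k)} associative.) -/
/-!
`2 δ(i,j,k) = |i - j| + |j - k| - |i - k|`: the defect of the triangle inequality at `j`
vanishes exactly when `j` lies between `i` and `k`, and otherwise equals twice the distance
from `j` to the nearer of `i`, `k`. After doubling, both sides of the identity become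
`|i - j| + |j - k| + |k - l| - |i - l|`.
-/

/-- The dot-count correction `δ(i,j,k)` in the KLRW/Coulomb-branch algebra:
`δ(i,j,k) = 0` if `(i−j)·(j−k) ≥ 0`, and `min(|i−j|, |j−k|)` otherwise. -/
def dlt (i j k : ℤ) : ℕ :=
  if 0 ≤ (i - j) * (j - k) then 0 else min (i - j).natAbs (j - k).natAbs

lemma two_mul_dlt (i j k : ℤ) : 2 * (dlt i j k : ℤ) = |i - j| + |j - k| - |i - k| := by
  simp only [dlt, Int.abs_eq_natAbs]
  split_ifs with h
  · rcases mul_nonneg_iff.mp h with ⟨_, _⟩ | ⟨_, _⟩ <;> omega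
  · rcases mul_neg_iff.mp (not_le.mp h) with ⟨_, _⟩ | ⟨_, _⟩ <;> omega

/-- For all integers `i, j, k, l` one has `δ(j,k,l) + δ(i,j,l) = δ(i,j,k) + δ(i,k,l)`;
this is exactly the identity making the KLRW multiplication
`μ²(a_{k,j}s^β, a_{j,i}s^α) = a_{k,i}s^{β+α+δ(i,j,k)}` associative. -/
theorem dlt_cocycle : ∀ i j k l : ℤ, dlt j k l + dlt i j l = dlt i j k + dlt i k l := by
  intro i j k l
  have hjkl := two_mul_dlt j k l
  have hijl := two_mul_dlt i j l
  have hijk := two_mul_dlt i j k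
  have hikl := two_mul_dlt i k l
  zify
  linarith
end

section
/- The k-bilinear multiplication on A determined on basis elements by (a_{k,j'}s^β)·(a_{j,i}s^α) = a_{k,i}s^{β+α+δ(i,j,k)} if j' = j and 0 otherwise is associative, and the element 1 := Σ_{i=0}^n e_i is a two-sided unit; hence A is an associative unital k-algebra (the KLRW algebra of the Fukaya category of the Coulomb branch M(•,1) with n punctures). -/
namespace KLRW

/-- Index of a basis element `a_{j,i}s^α`: `(j, i, α)` (target, source, number of dots). -/
abbrev B (n : ℕ) := Fin (n + 1) × Fin (n + 1) × ℕ

/-- The underlying free `k`-module of the KLRW algebra of the Fukaya category of the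
Coulomb branch `M(•,1)` with `n` punctures: the free module on the symbols `a_{j,i}s^α`. -/
abbrev A (n : ℕ) (k : Type*) [Field k] := B n →₀ k

variable (n : ℕ) (k : Type*) [Field k]

/-- `δ(i,j,l)` evaluated on vertex indices. -/
def dd (i j l : Fin (n + 1)) : ℕ := dlt ((i : ℕ) : ℤ) ((j : ℕ) : ℤ) ((l : ℕ) : ℤ)

/-- The basis element `a_{j,i}s^α`. -/
noncomputable def bas (j i : Fin (n + 1)) (α : ℕ) : A n k := Finsupp.single (j, i, α) 1

/-- Product of two basis elements:
`(a_{k,j'}s^β)·(a_{j,i}s^α) = a_{k,i}s^{β+α+δ(i,j,k)}` if `j' = j`, and `0` otherwise. -/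
noncomputable def mulB (x y : B n) : A n k :=
  if x.2.1 = y.1 then
    Finsupp.single (x.1, y.2.1, x.2.2 + y.2.2 + dd n y.2.1 y.1 x.1) 1
  else 0

/-- The `k`-bilinear multiplication on `A` determined by `mulB` on basis elements. -/
noncomputable def mul (x y : A n k) : A n k :=
  x.sum fun xb c => y.sum fun yb d => (c * d) • mulB n k xb yb

/-- The element `1 = Σ_{i=0}^n e_i` where `e_i = a_{i,i}s^0`. -/
noncomputable def one : A n k := Finset.univ.sum fun i : Fin (n + 1) => bas n k i i 0

end KLRW

theorem Finsupp.bilinear_assoc_of_single {R α : Type*} [CommSemiring R]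
    (M : (α →₀ R) →ₗ[R] (α →₀ R) →ₗ[R] α →₀ R)
    (h : ∀ a b c, M (M (single a 1) (single b 1)) (single c 1) =
      M (single a 1) (M (single b 1) (single c 1)))
    (x y z : α →₀ R) : M (M x y) z = M x (M y z) := by
  -- the two bracketings, as trilinear maps `x ↦ y ↦ z ↦ _`
  have bracketings_eq : LinearMap.llcomp R _ _ _ M ∘ₗ M =
      (LinearMap.llcomp R _ _ _).flip M ∘ₗ LinearMap.llcomp R _ _ _ ∘ₗ M := by
    ext a b c : 6
    simpa using h a b c
  exact congr($bracketings_eq x y z)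

namespace KLRW

lemma two_mul_dlt (i j k : ℤ) :
    2 * (dlt i j k : ℤ) = (i - j).natAbs + (j - k).natAbs - (i - k).natAbs := by
  unfold dlt
  split_ifs with h
  · rcases mul_nonneg_iff.mp h with ⟨_, _⟩ | ⟨_, _⟩ <;> omega
  · rcases mul_neg_iff.mp (not_le.mp h) with ⟨_, _⟩ | ⟨_, _⟩ <;> omega

lemma dlt_add_dlt (i j k l : ℤ) : dlt j k l + dlt i j l = dlt i j k + dlt i k l := by
  have := two_mul_dlt j k l
  have := two_mul_dlt i j l
  have := two_mul_dlt i j k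
  have := two_mul_dlt i k l
  omega

variable {n : ℕ} {k : Type*} [Field k]

lemma dd_add_dd (i j l m : Fin (n + 1)) : dd n j l m + dd n i j m = dd n i j l + dd n i l m :=
  dlt_add_dlt _ _ _ _

@[simp] lemma dd_self_left (i j : Fin (n + 1)) : dd n i i j = 0 := by simp [dd, dlt]
@[simp] lemma dd_self_right (i j : Fin (n + 1)) : dd n i j j = 0 := by simp [dd, dlt]

noncomputable def mulₗ : A n k →ₗ[k] A n k →ₗ[k] A n k :=
  Finsupp.linearCombination k fun a => Finsupp.linearCombination k (mulB n k a)

lemma mulₗ_apply (x y : A n k) : mulₗ x y = mul n k x y := by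
  simp only [mulₗ, mul, Finsupp.linearCombination_apply, LinearMap.finsupp_sum_apply,
    LinearMap.smul_apply, Finsupp.smul_sum, smul_smul]

lemma mulₗ_single_single (a b : B n) :
    mulₗ (Finsupp.single a (1 : k)) (Finsupp.single b 1) = mulB n k a b := by
  simp [mulₗ]

lemma mulₗ_mulB_single (a b c : B n) :
    mulₗ (mulB n k a b) (Finsupp.single c 1) = mulₗ (Finsupp.single a 1) (mulB n k b c) := by
  obtain ⟨a₁, a₂, α⟩ := a
  obtain ⟨b₁, b₂, β⟩ := b
  obtain ⟨c₁, c₂, γ⟩ := c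
  simp only [mulB]
  split_ifs with hab hbc
  · subst hab hbc
    simp only [mulₗ_single_single, mulB, if_true]
    congr 3
    linarith [dd_add_dd c₂ b₂ a₂ a₁]
  all_goals simp [mulₗ_single_single, mulB, *]

lemma mulₗ_one : mulₗ (one n k) = LinearMap.id := by
  ext b : 2
  simp [one, bas, map_sum, mulₗ_single_single, mulB]

lemma mulₗ_flip_one : mulₗ.flip (one n k) = LinearMap.id := by
  ext b : 2
  simp [one, bas, map_sum, mulₗ_single_single, mulB]

theorem mul_assoc (x y z : A n k) : mul n k (mul n k x y) z = mul n k x (mul n k y z) := by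
  simp only [← mulₗ_apply]
  refine Finsupp.bilinear_assoc_of_single _ (fun a b c => ?_) x y z
  rw [mulₗ_single_single, mulₗ_single_single, mulₗ_mulB_single]

theorem one_mul (x : A n k) : mul n k (one n k) x = x := by
  rw [← mulₗ_apply, mulₗ_one, LinearMap.id_apply]

theorem mul_one (x : A n k) : mul n k x (one n k) = x := by
  rw [← mulₗ_apply, ← LinearMap.flip_apply, mulₗ_flip_one, LinearMap.id_apply]

end KLRW

theorem klrw_assoc_unital_general (n : ℕ) (k : Type*) [Field k] :
    (∀ x y z : KLRW.A n k,
        KLRW.mul n k (KLRW.mul n k x y) z = KLRW.mul n k x (KLRW.mul n k y z)) ∧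
    (∀ x : KLRW.A n k,
        KLRW.mul n k (KLRW.one n k) x = x ∧ KLRW.mul n k x (KLRW.one n k) = x) :=
  ⟨KLRW.mul_assoc, fun x => ⟨KLRW.one_mul x, KLRW.mul_one x⟩⟩

/-- The `k`-bilinear multiplication on the KLRW algebra determined on basis elements by
`(a_{k,j'}s^β)·(a_{j,i}s^α) = a_{k,i}s^{β+α+δ(i,j,k)}` if `j' = j` (and `0` otherwise)
is associative, and `1 := Σ_{i=0}^n e_i` is a two-sided unit; hence `A` is an
associative unital `k`-algebra. -/
theorem klrw_assoc_unital (n : ℕ) (hn : 1 ≤ n) (k : Type*) [Field k] :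
    (∀ x y z : KLRW.A n k,
        KLRW.mul n k (KLRW.mul n k x y) z = KLRW.mul n k x (KLRW.mul n k y z)) ∧
    (∀ x : KLRW.A n k,
        KLRW.mul n k (KLRW.one n k) x = x ∧ KLRW.mul n k x (KLRW.one n k) = x) :=
  klrw_assoc_unital_general n k
end

section
/- For every m ≥ 3 one has ker d_m = range d_{m−1}. Consequently the Hochschild cohomology of the diagonal bimodule of the KLRW algebra vanishes in all degrees m ≥ 3: HH^m(Δ) = 0. -/
/-- The index set `S_0 = {e_i : 0 ≤ i ≤ n}`. -/
inductive S0 (n : ℕ) where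
  | e (i : Fin (n + 1))

/-- The index set `S_1 = {s_i} ∪ {p_{i+1}} ∪ {q_i}` (here `p i` stands for `p_{i+1}`). -/
inductive S1 (n : ℕ) where
  | s (i : Fin (n + 1))
  | p (i : Fin n)
  | q (i : Fin n)

/-- The index set `S_m` for `m ≥ 2`: the ambiguities `P^m_{i+1}, Q^m_i, sP^m_{i+1}, sQ^m_i`
(here `P i` stands for `P^m_{i+1}`, etc.). -/
inductive Shi (n : ℕ) where
  | P (i : Fin n)
  | Q (i : Fin n)
  | sP (i : Fin n)
  | sQ (i : Fin n)

/-- The Hochschild cochain spaces `C^m`: all functions `ℕ × S_m → k` (curried). -/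
abbrev C (n : ℕ) (k : Type*) [Field k] : ℕ → Type _
  | 0 => ℕ → S0 n → k
  | 1 => ℕ → S1 n → k
  | _ + 2 => ℕ → Shi n → k

/-- `(prev φ) ℓ w = φ_{ℓ−1}(w)` with the convention `φ_{−1} = 0`. -/
def prev {k σ : Type*} [Field k] (φ : ℕ → σ → k) : ℕ → σ → k
  | 0, _ => 0
  | ℓ + 1, w => φ ℓ w

variable (n : ℕ) (k : Type*) [Field k]

/-- The differential `d_0`. -/
def d0 (φ : C n k 0) : C n k 1 := fun ℓ w =>
  match w with
  | .s _ => 0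
  | .p i => φ ℓ (.e i.succ) - φ ℓ (.e i.castSucc)
  | .q i => φ ℓ (.e i.castSucc) - φ ℓ (.e i.succ)

/-- The differential `d_1`. -/
def d1 (φ : C n k 1) : C n k 2 := fun ℓ w =>
  match w with
  | .P i => prev φ ℓ (.p i) + prev φ ℓ (.q i) - φ ℓ (.s i.succ)
  | .Q i => prev φ ℓ (.q i) + prev φ ℓ (.p i) - φ ℓ (.s i.castSucc)
  | .sP i => φ ℓ (.s i.succ) - φ ℓ (.s i.castSucc)
  | .sQ i => φ ℓ (.s i.castSucc) - φ ℓ (.s i.succ)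

/-- The differential `d_m` for even `m ≥ 2`. -/
def dE (φ : ℕ → Shi n → k) : ℕ → Shi n → k := fun ℓ w =>
  match w with
  | .P i => φ ℓ (.P i) - φ ℓ (.Q i) + φ ℓ (.sP i)
  | .Q i => φ ℓ (.Q i) - φ ℓ (.P i) + φ ℓ (.sQ i)
  | .sP i => prev φ ℓ (.sP i) + prev φ ℓ (.sQ i)
  | .sQ i => prev φ ℓ (.sQ i) + prev φ ℓ (.sP i)

/-- The differential `d_m` for odd `m ≥ 3`. -/
def dO (φ : ℕ → Shi n → k) : ℕ → Shi n → k := fun ℓ w =>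
  match w with
  | .P i => prev φ ℓ (.P i) + prev φ ℓ (.Q i) - φ ℓ (.sP i)
  | .Q i => prev φ ℓ (.Q i) + prev φ ℓ (.P i) - φ ℓ (.sQ i)
  | .sP i => φ ℓ (.sP i) - φ ℓ (.sQ i)
  | .sQ i => φ ℓ (.sQ i) - φ ℓ (.sP i)

/-- The Hochschild differential `d_m : C^m → C^{m+1}` of the diagonal bimodule of the KLRW
algebra, computed from the Chouhy–Solotar resolution. -/
def d : (m : ℕ) → C n k m → C n k (m + 1)
  | 0 => d0 n k
  | 1 => d1 n k
  | m + 2 => if Even (m + 2) then dE n k else dO n k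

/-!
From degree 2 on the complex is 2-periodic: `d` alternates between `dE` and `dO`, with
`dE ∘ dO = 0 = dO ∘ dE`, and every cocycle has an explicit preimage, built separately for each
`ℓ` and `i` from the `P`, `Q` components of the cocycle.
-/

section Periodic

variable {n k}

theorem dE_dO_eq_zero (ψ : ℕ → Shi n → k) : dE n k (dO n k ψ) = fun _ _ => 0 := by
  funext ℓ w
  cases w <;> cases ℓ <;> simp [dE, dO, prev] <;> ring

theorem dO_dE_eq_zero (ψ : ℕ → Shi n → k) : dO n k (dE n k ψ) = fun _ _ => 0 := by
  funext ℓ w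
  cases w <;> cases ℓ <;> simp [dE, dO, prev] <;> ring

theorem exists_dO_eq_of_dE_eq_zero {φ : ℕ → Shi n → k} (h : dE n k φ = fun _ _ => 0) :
    ∃ ψ, dO n k ψ = φ := by
  have hP ℓ i : φ ℓ (.P i) - φ ℓ (.Q i) + φ ℓ (.sP i) = 0 := congrFun (congrFun h ℓ) (.P i)
  have hQ ℓ i : φ ℓ (.Q i) - φ ℓ (.P i) + φ ℓ (.sQ i) = 0 := congrFun (congrFun h ℓ) (.Q i)
  refine ⟨fun ℓ w => match w with
    | .P _ | .Q _ => 0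
    | .sP i => -φ ℓ (.P i)
    | .sQ i => -φ ℓ (.Q i), ?_⟩
  funext ℓ w
  cases w with
  | P i | Q i => cases ℓ <;> simp [dO, prev]
  | sP i => simp only [dO]; linear_combination -hP ℓ i
  | sQ i => simp only [dO]; linear_combination -hQ ℓ i

theorem exists_dE_eq_of_dO_eq_zero {φ : ℕ → Shi n → k} (h : dO n k φ = fun _ _ => 0) :
    ∃ ψ, dE n k ψ = φ := by
  have hP ℓ i : prev φ ℓ (.P i) + prev φ ℓ (.Q i) - φ ℓ (.sP i) = 0 :=
    congrFun (congrFun h ℓ) (.P i)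
  have hsP ℓ i : φ ℓ (.sP i) - φ ℓ (.sQ i) = 0 := congrFun (congrFun h ℓ) (.sP i)
  refine ⟨fun ℓ w => match w with
    | .P i => φ ℓ (.P i)
    | .Q _ | .sP _ => 0
    | .sQ i => φ ℓ (.P i) + φ ℓ (.Q i), ?_⟩
  funext ℓ w
  cases w with
  | P i => simp [dE]
  | Q i => simp only [dE]; ring
  | sP i =>
    have hPℓ := hP ℓ i
    cases ℓ <;> simp only [dE, prev] at hPℓ ⊢ <;> linear_combination hPℓ
  | sQ i =>
    have hPℓ := hP ℓ i
    have hsPℓ := hsP ℓ i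
    cases ℓ <;> simp only [dE, prev] at hPℓ hsPℓ ⊢ <;> linear_combination hPℓ + hsPℓ

theorem dE_eq_zero_iff (φ : ℕ → Shi n → k) :
    dE n k φ = (fun _ _ => 0) ↔ ∃ ψ, dO n k ψ = φ :=
  ⟨exists_dO_eq_of_dE_eq_zero, fun ⟨ψ, hψ⟩ => hψ ▸ dE_dO_eq_zero ψ⟩

theorem dO_eq_zero_iff (φ : ℕ → Shi n → k) :
    dO n k φ = (fun _ _ => 0) ↔ ∃ ψ, dE n k ψ = φ :=
  ⟨exists_dE_eq_of_dO_eq_zero, fun ⟨ψ, hψ⟩ => hψ ▸ dO_dE_eq_zero ψ⟩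

theorem d_add_two_of_even {m : ℕ} (hm : Even m) : d n k (m + 2) = dE n k :=
  if_pos (by simpa [Nat.even_add] using hm)

theorem d_add_two_of_odd {m : ℕ} (hm : Odd m) : d n k (m + 2) = dO n k :=
  if_neg (by simpa [Nat.even_add] using hm)

end Periodic

theorem ker_d_eq_range_d :
    ∀ (m : ℕ) (φ : C n k (m + 3)),
      d n k (m + 3) φ = (fun _ _ => (0 : k)) ↔ ∃ ψ : C n k (m + 2), d n k (m + 2) ψ = φ := by
  intro m φ
  rcases Nat.even_or_odd m with hm | hm
  · rw [d_add_two_of_odd (m := m + 1) hm.add_one, d_add_two_of_even hm]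
    exact dO_eq_zero_iff φ
  · rw [d_add_two_of_even (m := m + 1) hm.add_one, d_add_two_of_odd hm]
    exact dE_eq_zero_iff φ
end
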